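/- arXiv:2409.14052 — 3 statements merged into one kernel-verified Lean document; each statement's English description precedes it below -/
import Mathlib

section
/- If all pairwise greatest common divisors gcd(a_s, a_t) for 1 ≤ s < t ≤ k+1 are equewie—equal to one common value—then there exists an integer c such that for every i with 1 ≤ i ≤ k, a_{i+1} divides c − a_i; that is, there is a single integer c lying in every set 𝐜₁, 𝐜₂, …, 𝐜_k. -/
/-!
Let `g` be the common value of the pairwise gcds. It divides every `a i`, and the quotients
`a (i+1) / g` are pairwise coprime, so the Chinese remainder theorem gives `y` with
`y ≡ a i / g (mod a (i+1) / g)` for all `i`; then `c = g * y` works. When `g = 0` all the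
`a i` involved vanish and `c = 0` works.
-/

theorem exists_forall_dvd_sub_of_pairwise_isCoprime {R ι : Type*} [CommRing R] [Finite ι]
    {m : ι → R} (hm : Pairwise fun i j ↦ IsCoprime (m i) (m j)) (r : ι → R) :
    ∃ x, ∀ i, m i ∣ x - r i := by
  have hI : Pairwise fun i j ↦ IsCoprime (Ideal.span {m i}) (Ideal.span {m j}) :=
    fun i j hij ↦ (Ideal.isCoprime_span_singleton_iff _ _).mpr (hm hij)
  obtain ⟨x, hx⟩ := Ideal.exists_forall_sub_mem_ideal hI r
  exact ⟨x, fun i ↦ Ideal.mem_span_singleton.mp (hx i)⟩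

theorem Int.exists_forall_dvd_sub_of_pairwise_gcd_eq {ι : Type*} [Finite ι] {m r : ι → ℤ}
    {g : ℕ} (hgcd : Pairwise fun i j ↦ Int.gcd (m i) (m j) = g) (hm : ∀ i, (g : ℤ) ∣ m i)
    (hr : ∀ i, (g : ℤ) ∣ r i) :
    ∃ x, ∀ i, m i ∣ x - r i := by
  rcases Nat.eq_zero_or_pos g with rfl | hg
  · simp only [Nat.cast_zero, zero_dvd_iff] at hm hr
    exact ⟨0, fun i ↦ by simp [hm i, hr i]⟩
  have hcop : Pairwise fun i j ↦ IsCoprime (m i / g) (m j / g) := fun i j hij ↦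
    Int.isCoprime_iff_gcd_eq_one.mpr <| by
      rw [← hgcd hij]
      exact Int.gcd_div_gcd_div_gcd (hgcd hij ▸ hg)
  obtain ⟨y, hy⟩ := exists_forall_dvd_sub_of_pairwise_isCoprime hcop (fun i ↦ r i / g)
  refine ⟨g * y, fun i ↦ ?_⟩
  have hsub : (g : ℤ) * y - r i = g * (y - r i / g) := by
    rw [mul_sub, Int.mul_ediv_cancel' (hr i)]
  rw [hsub, ← Int.mul_ediv_cancel' (hm i)]
  exact mul_dvd_mul_left _ (hy i)

theorem exists_common_c_of_pairwise_gcd_eq_general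
    (a : ℕ → ℕ) (k : ℕ)
    (hgcd : ∃ g : ℕ, ∀ s t, 1 ≤ s → s < t → t ≤ k + 1 → Nat.gcd (a s) (a t) = g) :
    ∃ c : ℤ, ∀ i, 1 ≤ i → i ≤ k → (a (i + 1) : ℤ) ∣ (c - (a i : ℤ)) := by
  obtain ⟨g, hg⟩ := hgcd
  have hpair : Pairwise fun i j : Set.Icc 1 k ↦
      Int.gcd (a (i.1 + 1) : ℤ) (a (j.1 + 1)) = g := by
    intro i j hij
    obtain ⟨⟨hi1, hik⟩, ⟨hj1, hjk⟩⟩ := And.intro i.2 j.2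
    rw [Int.gcd_natCast_natCast]
    rcases Nat.lt_or_gt_of_ne (Subtype.coe_ne_coe.mpr hij) with h | h
    · exact hg _ _ (by omega) (by omega) (by omega)
    · rw [Nat.gcd_comm]
      exact hg _ _ (by omega) (by omega) (by omega)
  have hadj (i : Set.Icc 1 k) : Nat.gcd (a i) (a (i.1 + 1)) = g :=
    hg _ _ i.2.1 (Nat.lt_succ_self _) (Nat.succ_le_succ i.2.2)
  obtain ⟨c, hc⟩ := Int.exists_forall_dvd_sub_of_pairwise_gcd_eq hpair
    (fun i ↦ Int.natCast_dvd_natCast.mpr (hadj i ▸ Nat.gcd_dvd_right _ _))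
    (fun i ↦ Int.natCast_dvd_natCast.mpr (hadj i ▸ Nat.gcd_dvd_left _ _))
  exact ⟨c, fun i hi1 hik ↦ hc ⟨i, hi1, hik⟩⟩

/-- If all pairwise gcds of `a 1, …, a (k+1)` are equal to one common value, then there
exists an integer `c` lying in every set `𝐜ᵢ`, i.e. with `a (i+1) ∣ (c - a i)` for all
`1 ≤ i ≤ k`. -/
theorem exists_common_c_of_pairwise_gcd_eq
    (a : ℕ → ℕ) (k : ℕ) (hk : 1 ≤ k)
    (hb : 1 ≤ a 2) (hab : a 2 < a 1)
    (hrec : ∀ i, 1 ≤ i → i ≤ k → a (i + 2) = a i % a (i + 1))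
    (hpos : 0 < a (k + 1)) (hzero : a (k + 2) = 0)
    (hgcd : ∃ g : ℕ, ∀ s t, 1 ≤ s → s < t → t ≤ k + 1 → Nat.gcd (a s) (a t) = g) :
    ∃ c : ℤ, ∀ i, 1 ≤ i → i ≤ k → (a (i + 1) : ℤ) ∣ (c - (a i : ℤ)) :=
  exists_common_c_of_pairwise_gcd_eq_general a k hgcd
end

section
/- If all pairwise greatest common divisors gcd(a_s, a_t) for 1 ≤ s < t ≤ k+1 are equal to one common value, then for all indices j, l with 1 ≤ j < l ≤ k, gcd(a_{j+1}, a_{l+1}) divides a_{j+2} − a_{l+2} (where a_{k+2} = 0); i.e., the system of congruences c ≡ a_{j+2} (mod a_{j+1}) for 1 ≤ j ≤ k satisfies the pairwise compatibility condition of the Chinese remainder theorem. -/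
theorem Nat.gcd_dvd_mod (m n : ℕ) : Nat.gcd m n ∣ m % n :=
  (Nat.dvd_mod_iff (Nat.gcd_dvd_right m n)).2 (Nat.gcd_dvd_left m n)

theorem dvd_remainder_of_gcd_succ_eq (a : ℕ → ℕ) (k g : ℕ)
    (hrec : ∀ i, 1 ≤ i → i ≤ k → a (i + 2) = a i % a (i + 1))
    (hg : ∀ i, 1 ≤ i → i ≤ k → Nat.gcd (a i) (a (i + 1)) = g)
    {i : ℕ} (hi : 1 ≤ i) (hik : i ≤ k) : g ∣ a (i + 2) := by
  rw [hrec i hi hik, ← hg i hi hik]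
  exact Nat.gcd_dvd_mod _ _

theorem crt_compatibility_of_pairwise_gcd_eq_general
    (a : ℕ → ℕ) (k : ℕ)
    (hrec : ∀ i, 1 ≤ i → i ≤ k → a (i + 2) = a i % a (i + 1))
    (hgcd : ∃ g : ℕ, ∀ s t, 1 ≤ s → s < t → t ≤ k + 1 → Nat.gcd (a s) (a t) = g) :
    ∀ j l, 1 ≤ j → j < l → l ≤ k →
      (Nat.gcd (a (j + 1)) (a (l + 1)) : ℤ) ∣ ((a (j + 2) : ℤ) - (a (l + 2) : ℤ)) := by
  obtain ⟨g, hg⟩ := hgcd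
  have hg_succ : ∀ i, 1 ≤ i → i ≤ k → Nat.gcd (a i) (a (i + 1)) = g :=
    fun i hi hik ↦ hg i (i + 1) hi (by omega) (by omega)
  intro j l hj hjl hlk
  rw [hg (j + 1) (l + 1) (by omega) (by omega) (by omega)]
  exact dvd_sub
    (Int.natCast_dvd_natCast.2 (dvd_remainder_of_gcd_succ_eq a k g hrec hg_succ hj (by omega)))
    (Int.natCast_dvd_natCast.2 (dvd_remainder_of_gcd_succ_eq a k g hrec hg_succ (by omega) hlk))

/-- If all pairwise gcds of `a 1, …, a (k+1)` are equal to one common value, then for all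
`1 ≤ j < l ≤ k`, `gcd (a (j+1)) (a (l+1))` divides `a (j+2) - a (l+2)`: the CRT pairwise
compatibility condition for the congruences `c ≡ a (j+2) (mod a (j+1))`. -/
theorem crt_compatibility_of_pairwise_gcd_eq
    (a : ℕ → ℕ) (k : ℕ) (hk : 1 ≤ k)
    (hb : 1 ≤ a 2) (hab : a 2 < a 1)
    (hrec : ∀ i, 1 ≤ i → i ≤ k → a (i + 2) = a i % a (i + 1))
    (hpos : 0 < a (k + 1)) (hzero : a (k + 2) = 0)
    (hgcd : ∃ g : ℕ, ∀ s t, 1 ≤ s → s < t → t ≤ k + 1 → Nat.gcd (a s) (a t) = g) :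
    ∀ j l, 1 ≤ j → j < l → l ≤ k →
      (Nat.gcd (a (j + 1)) (a (l + 1)) : ℤ) ∣ ((a (j + 2) : ℤ) - (a (l + 2) : ℤ)) :=
  crt_compatibility_of_pairwise_gcd_eq_general a k hrec hgcd
end

section
/- Let g = gcd(a₁, a₂) = a_{k+1} and L = lcm(a₂, …, a_{k+1}). Then the total number of recursive calls over one full period satisfies Σ_{c=1}^{L} R(c) ≤ Σ_{i=1}^{k} i·(L/a_{i+1}) + (k+1)·(L − L/g); equivalently, the average of R over c ∈ {1, …, L} is at most Σ_{i=1}^{k} i/a_{i+1} + (k+1)·(g−1)/g. -/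
open scoped Classical

/-- The number of recursive calls made by the DEA-R algorithm on input `(a 1, a 2, c)`,
where `a 1, a 2, …, a (k+2)` is the Euclidean remainder sequence:
the least `i ∈ {1,…,k}` with `a (i+1) ∣ (c - a i)` if one exists, and `k+1` otherwise. -/
noncomputable def DEA_R (a : ℕ → ℕ) (k : ℕ) (c : ℤ) : ℕ :=
  if ∃ i, 1 ≤ i ∧ i ≤ k ∧ (a (i + 1) : ℤ) ∣ (c - (a i : ℤ))
  then sInf {i | 1 ≤ i ∧ i ≤ k ∧ (a (i + 1) : ℤ) ∣ (c - (a i : ℤ))}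
  else k + 1

/-!
Sort the inputs `c ∈ {1, …, L}` by the value of `R c`. If `R c = i ≤ k`, then `c` lies in
the residue class of `a i` modulo `a (i+1)`, which has exactly `L / a (i+1)` elements in
`{1, …, L}` because `a (i+1) ∣ L`. If `R c = k + 1`, then `a (k+1) ∤ c`, since otherwise
`a (k+1) ∣ c - a k` by `a (k+1) ∣ a k`; and `a (k+1) = gcd (a 1) (a 2)` because the gcd is
invariant along the Euclidean algorithm. Bounding each fibre by its count gives the first
inequality; dividing by `L` gives the second.
-/

open Finset

theorem card_filter_Icc_dvd_sub {m L : ℕ} (hmL : m ∣ L) (v : ℤ) :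
    #{c ∈ Icc 1 L | (m : ℤ) ∣ ((c : ℕ) : ℤ) - v} = L / m := by
  rcases Nat.eq_zero_or_pos m with rfl | hm
  · simp [Nat.eq_zero_of_zero_dvd hmL]
  obtain ⟨q, rfl⟩ := hmL
  have hcast : {c ∈ Icc 1 (m * q) | (m : ℤ) ∣ ((c : ℕ) : ℤ) - v}.map Nat.castEmbedding =
      {x ∈ Ioc (0 : ℤ) (m * q : ℕ) | x ≡ v [ZMOD m]} := by
    ext x
    simp only [mem_map, mem_filter, mem_Icc, mem_Ioc, Nat.castEmbedding_apply, Int.modEq_iff_dvd]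
    constructor
    · rintro ⟨c, ⟨⟨h1, h2⟩, hd⟩, rfl⟩
      exact ⟨⟨by omega, by omega⟩, dvd_sub_comm.1 hd⟩
    · rintro ⟨⟨h1, h2⟩, hd⟩
      lift x to ℕ using h1.le
      exact ⟨x, ⟨⟨by omega, by omega⟩, dvd_sub_comm.1 hd⟩, rfl⟩
  have hfloor :
      ((m * q : ℕ) - v : ℚ) / ((m : ℤ) : ℚ) = (q : ℤ) + (0 - v) / ((m : ℤ) : ℚ) := by
    push_cast; field_simp; ring
  apply Nat.cast_injective (R := ℤ)
  rw [← card_map, hcast, Int.Ioc_filter_modEq_card _ _ (by exact_mod_cast hm), Int.cast_zero,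
    Int.cast_natCast, hfloor, Int.floor_intCast_add, Nat.mul_div_cancel_left _ hm]
  simp

theorem card_filter_Icc_not_dvd (L m : ℕ) : #{c ∈ Icc 1 L | ¬m ∣ c} = L - L / m := by
  have hsplit := card_filter_add_card_filter_not (s := Icc 1 L) (p := (m ∣ ·))
  have hdvd : #{c ∈ Icc 1 L | m ∣ c} = L / m := Nat.Ioc_filter_dvd_card_eq_div L m
  rw [Nat.card_Icc] at hsplit
  omega

section DEA_R

variable {a : ℕ → ℕ} {k : ℕ}

theorem DEA_R_mem_Icc (c : ℤ) : DEA_R a k c ∈ Icc 1 (k + 1) := by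
  unfold DEA_R
  split_ifs with h
  · have := Nat.sInf_mem h
    exact mem_Icc.2 ⟨this.1, this.2.1.trans k.le_succ⟩
  · simp

theorem dvd_sub_of_DEA_R_eq {c : ℤ} {i : ℕ} (hi : i ≤ k) (h : DEA_R a k c = i) :
    (a (i + 1) : ℤ) ∣ c - a i := by
  unfold DEA_R at h
  split_ifs at h with hex
  · exact h ▸ (Nat.sInf_mem hex).2.2
  · omega

theorem DEA_R_le_of_dvd_sub {c : ℤ} {i : ℕ} (h1 : 1 ≤ i) (hik : i ≤ k)
    (hd : (a (i + 1) : ℤ) ∣ c - a i) : DEA_R a k c ≤ i := by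
  unfold DEA_R
  rw [if_pos ⟨i, h1, hik, hd⟩]
  exact Nat.sInf_le ⟨h1, hik, hd⟩

theorem card_DEA_R_eq_le {L i : ℕ} (hi : i ≤ k) (hL : a (i + 1) ∣ L) :
    #{c ∈ Icc 1 L | DEA_R a k ((c : ℕ) : ℤ) = i} ≤ L / a (i + 1) :=
  card_filter_Icc_dvd_sub hL (a i) ▸
    card_le_card (monotone_filter_right _ fun _ _ => dvd_sub_of_DEA_R_eq hi)

theorem card_DEA_R_eq_succ_le {L : ℕ} (hk : 1 ≤ k) (hdvd : a (k + 1) ∣ a k) :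
    #{c ∈ Icc 1 L | DEA_R a k ((c : ℕ) : ℤ) = k + 1} ≤ L - L / a (k + 1) := by
  rw [← card_filter_Icc_not_dvd]
  refine card_le_card (monotone_filter_right _ fun c _ hR hc => ?_)
  have hle : DEA_R a k c ≤ k :=
    DEA_R_le_of_dvd_sub hk le_rfl
      (dvd_sub (Int.natCast_dvd_natCast.2 hc) (Int.natCast_dvd_natCast.2 hdvd))
  omega

theorem sum_DEA_R_le {L : ℕ} (hk : 1 ≤ k) (hdvd : a (k + 1) ∣ a k)
    (hL : ∀ i ∈ Icc 1 k, a (i + 1) ∣ L) :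
    ∑ c ∈ Icc 1 L, DEA_R a k (c : ℤ)
      ≤ ∑ i ∈ Icc 1 k, i * (L / a (i + 1)) + (k + 1) * (L - L / a (k + 1)) := by
  have fiber (i : ℕ) : ∑ c ∈ Icc 1 L with DEA_R a k ((c : ℕ) : ℤ) = i, DEA_R a k c
      = i * #{c ∈ Icc 1 L | DEA_R a k ((c : ℕ) : ℤ) = i} := by
    rw [sum_const_nat fun c hc => (mem_filter.1 hc).2, mul_comm]
  rw [← sum_fiberwise_of_maps_to (g := fun c : ℕ => DEA_R a k c) fun c _ => DEA_R_mem_Icc c,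
    sum_Icc_succ_top (by omega)]
  simp only [fiber]
  gcongr with i hi
  · exact card_DEA_R_eq_le (mem_Icc.1 hi).2 (hL i hi)
  · exact card_DEA_R_eq_succ_le hk hdvd

end DEA_R

section RemainderSequence

variable {a : ℕ → ℕ} {k : ℕ}
  (hrec : ∀ i, 1 ≤ i → i ≤ k → a (i + 2) = a i % a (i + 1))
include hrec

theorem gcd_eq_gcd_of_remainder_seq {j : ℕ} (hj : j ≤ k) :
    Nat.gcd (a 1) (a 2) = Nat.gcd (a (j + 1)) (a (j + 2)) := by
  induction j with
  | zero => rfl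
  | succ j ih =>
    rw [ih (by omega), hrec (j + 1) (by omega) hj, Nat.gcd_comm (a (j + 1 + 1)), ← Nat.gcd_rec,
      Nat.gcd_comm]

theorem gcd_eq_last_of_remainder_seq (hzero : a (k + 2) = 0) : Nat.gcd (a 1) (a 2) = a (k + 1) := by
  rw [gcd_eq_gcd_of_remainder_seq hrec le_rfl, hzero, Nat.gcd_zero_right]

theorem last_dvd_of_remainder_seq (hk : 1 ≤ k) (hzero : a (k + 2) = 0) : a (k + 1) ∣ a k :=
  Nat.dvd_of_mod_eq_zero (hrec k hk le_rfl ▸ hzero)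

end RemainderSequence

theorem Nat.cast_sub_div_eq_mul {K : Type*} [Field K] [CharZero K] {g L : ℕ} (hg : 0 < g)
    (hgL : g ∣ L) : ((L - L / g : ℕ) : K) = ((g : K) - 1) / g * L := by
  have hg' : (g : K) ≠ 0 := by exact_mod_cast hg.ne'
  rw [Nat.cast_sub (Nat.div_le_self L g), Nat.cast_div hgL hg']
  field_simp

theorem DEA_R_sum_over_period_le_general
    (a : ℕ → ℕ) (k : ℕ) (hk : 1 ≤ k)
    (hrec : ∀ i, 1 ≤ i → i ≤ k → a (i + 2) = a i % a (i + 1))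
    (hpos : 0 < a (k + 1)) (hzero : a (k + 2) = 0)
    (L : ℕ) (hL : L = (Finset.Icc 2 (k + 1)).lcm a)
    :
    (∑ c ∈ Finset.Icc 1 L, DEA_R a k (c : ℤ))
        ≤ (∑ i ∈ Finset.Icc 1 k, i * (L / a (i + 1)))
          + (k + 1) * (L - L / Nat.gcd (a 1) (a 2)) ∧
    (∑ c ∈ Finset.Icc 1 L, (DEA_R a k (c : ℤ) : ℚ)) / (L : ℚ)
        ≤ (∑ i ∈ Finset.Icc 1 k, (i : ℚ) / (a (i + 1) : ℚ))
          + ((k : ℚ) + 1) * (((Nat.gcd (a 1) (a 2) : ℚ) - 1) / (Nat.gcd (a 1) (a 2) : ℚ)) := by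
  have hdvdL (i : ℕ) (hi : i ∈ Icc 1 k) : a (i + 1) ∣ L := by
    obtain ⟨hi1, hik⟩ := mem_Icc.1 hi
    exact hL ▸ dvd_lcm (mem_Icc.2 ⟨by omega, by omega⟩)
  have hsum := sum_DEA_R_le hk (last_dvd_of_remainder_seq hrec hk hzero) hdvdL
  rw [gcd_eq_last_of_remainder_seq hrec hzero]
  refine ⟨hsum, div_le_of_le_mul₀ L.cast_nonneg ?_ ?_⟩
  · have hfrac : (0 : ℚ) ≤ ((a (k + 1) : ℚ) - 1) / a (k + 1) :=
      div_nonneg (sub_nonneg.2 (Nat.one_le_cast.2 hpos)) (Nat.cast_nonneg _)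
    positivity
  calc (∑ c ∈ Icc 1 L, (DEA_R a k (c : ℤ) : ℚ))
      ≤ ∑ i ∈ Icc 1 k, (i : ℚ) * ((L / a (i + 1) : ℕ) : ℚ)
          + ((k : ℚ) + 1) * (((a (k + 1) : ℚ) - 1) / a (k + 1) * L) := by
        rw [← Nat.cast_sub_div_eq_mul hpos (hdvdL k (mem_Icc.2 ⟨hk, le_rfl⟩))]
        exact_mod_cast hsum
    _ ≤ ∑ i ∈ Icc 1 k, (i : ℚ) * (L / a (i + 1))
          + ((k : ℚ) + 1) * (((a (k + 1) : ℚ) - 1) / a (k + 1) * L) := by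
        gcongr
        exact Nat.cast_div_le
    _ = _ := by
        rw [add_mul _ _ (L : ℚ), sum_mul]
        congr 1
        · exact sum_congr rfl fun i _ => by ring
        · ring

/-- Over one full period `{1, …, L}` with `L = lcm(a₂, …, a_{k+1})` and
`g = gcd (a 1) (a 2) = a (k+1)`, the total number of recursive calls satisfies
`Σ_{c=1}^{L} R c ≤ Σ_{i=1}^{k} i·(L / a (i+1)) + (k+1)·(L - L/g)`; equivalently the
average of `R` over `{1, …, L}` is at most `Σ_{i=1}^{k} i / a (i+1) + (k+1)·(g-1)/g`. -/
theorem DEA_R_sum_over_period_le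
    (a : ℕ → ℕ) (k : ℕ) (hk : 1 ≤ k)
    (hb : 1 ≤ a 2) (hab : a 2 < a 1)
    (hrec : ∀ i, 1 ≤ i → i ≤ k → a (i + 2) = a i % a (i + 1))
    (hpos : 0 < a (k + 1)) (hzero : a (k + 2) = 0)
    (L : ℕ) (hL : L = (Finset.Icc 2 (k + 1)).lcm a)
    :
    (∑ c ∈ Finset.Icc 1 L, DEA_R a k (c : ℤ))
        ≤ (∑ i ∈ Finset.Icc 1 k, i * (L / a (i + 1)))
          + (k + 1) * (L - L / Nat.gcd (a 1) (a 2)) ∧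
    (∑ c ∈ Finset.Icc 1 L, (DEA_R a k (c : ℤ) : ℚ)) / (L : ℚ)
        ≤ (∑ i ∈ Finset.Icc 1 k, (i : ℚ) / (a (i + 1) : ℚ))
          + ((k : ℚ) + 1) * (((Nat.gcd (a 1) (a 2) : ℚ) - 1) / (Nat.gcd (a 1) (a 2) : ℚ)) :=
  DEA_R_sum_over_period_le_general a k hk hrec hpos hzero L hL
end
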